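/- For every k ≥ 1 there exists a map φ from the alphabet {a₁, ā₁, …, a_k, ā_k} to words over {(, ), [, ]}, extended multiplicatively to a monoid homomorphism φ : words over {a₁, ā₁, …, a_k, ā_k} → words over {(, ), [, ]}, such that for every word w over {a₁, ā₁, …, a_k, ā_k}: w belongs to the Dyck-k language if and only if φ(w) belongs to the Dyck-2 language. -/

import Mathlib

/-!
A word is a Dyck word iff the stack machine that pushes opening brackets and pops matching
closing ones never meets a mismatch and ends with an empty stack. Under
`aᵢ ↦ ( [ⁱ`, `āᵢ ↦ ]ⁱ )` the Dyck-2 machine run on `φ(w)` keeps, as its stack, the unary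
encoding `[ⁱ (` of each entry `i` of the Dyck-k machine's stack on `w`, and it fails exactly
when that one does: reading `]ʲ )` against `[ⁱ (` on top mismatches unless `i = j`.
-/

/-- The alphabet {(, ), [, ]} of two types of parentheses. -/
inductive P2 where
  | lp : P2   -- '('
  | rp : P2   -- ')'
  | lb : P2   -- '['
  | rb : P2   -- ']'
deriving DecidableEq

/-- The Dyck-2 language over {(, ), [, ]}: the least set of words containing the empty
word and closed under `w ↦ (w)`, `w ↦ [w]` and concatenation. -/
inductive Dyck2 : List P2 → Prop
  | nil : Dyck2 []
  | paren {w : List P2} : Dyck2 w → Dyck2 (P2.lp :: w ++ [P2.rp])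
  | brack {w : List P2} : Dyck2 w → Dyck2 (P2.lb :: w ++ [P2.rb])
  | concat {u v : List P2} : Dyck2 u → Dyck2 v → Dyck2 (u ++ v)

/-- The Dyck-k language over the alphabet `Fin k × Bool`, where `(i, true)` is the
opening parenthesis `a_i` and `(i, false)` is the closing parenthesis `ā_i`: the least
set of words containing the empty word and closed under `w ↦ a_i w ā_i` and
concatenation. -/
inductive DyckK (k : ℕ) : List (Fin k × Bool) → Prop
  | nil : DyckK k []
  | wrap (i : Fin k) {w : List (Fin k × Bool)} :
      DyckK k w → DyckK k ((i, true) :: w ++ [(i, false)])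
  | concat {u v : List (Fin k × Bool)} : DyckK k u → DyckK k v → DyckK k (u ++ v)

section Brackets

variable {α : Type*}

/-- Letters `(a, true)` and `(a, false)` are the opening and closing brackets of kind `a`. -/
inductive IsDyck : List (α × Bool) → Prop
  | nil : IsDyck []
  | wrap (a : α) {w : List (α × Bool)} : IsDyck w → IsDyck ((a, true) :: w ++ [(a, false)])
  | append {u v : List (α × Bool)} : IsDyck u → IsDyck v → IsDyck (u ++ v)

/-- `ClosesStack s w` says that `w = u₀ ++ (s₀, false) :: u₁ ++ (s₁, false) :: ⋯ ++ uₙ` with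
every `uᵢ` a Dyck word. -/
def ClosesStack : List α → List (α × Bool) → Prop
  | [], w => IsDyck w
  | a :: s, w => ∃ u v, IsDyck u ∧ ClosesStack s v ∧ w = u ++ (a, false) :: v

lemma ClosesStack.isDyck_append {s : List α} {u w : List (α × Bool)} (hu : IsDyck u)
    (hw : ClosesStack s w) : ClosesStack s (u ++ w) := by
  cases s with
  | nil => exact hu.append hw
  | cons a s =>
    obtain ⟨u', v, hu', hv, rfl⟩ := hw
    exact ⟨u ++ u', v, hu.append hu', hv, by simp⟩

variable [DecidableEq α]

/-- The stack of still-open bracket kinds (innermost first) after reading a word from the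
stack `s`, or `none` once a closing bracket does not match. -/
def dyckRun : List α → List (α × Bool) → Option (List α)
  | s, [] => some s
  | s, (a, true) :: w => dyckRun (a :: s) w
  | [], (_, false) :: _ => none
  | b :: s, (a, false) :: w => if a = b then dyckRun s w else none

@[simp] lemma dyckRun_nil_right (s : List α) : dyckRun s [] = some s := rfl

@[simp] lemma dyckRun_cons_open (s : List α) (a : α) (w : List (α × Bool)) :
    dyckRun s ((a, true) :: w) = dyckRun (a :: s) w := rfl

@[simp] lemma dyckRun_nil_cons_close (a : α) (w : List (α × Bool)) :
    dyckRun [] ((a, false) :: w) = none := rfl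

@[simp] lemma dyckRun_cons_cons_close (b : α) (s : List α) (a : α) (w : List (α × Bool)) :
    dyckRun (b :: s) ((a, false) :: w) = if a = b then dyckRun s w else none := rfl

lemma dyckRun_append (s : List α) (u v : List (α × Bool)) :
    dyckRun s (u ++ v) = (dyckRun s u).bind (dyckRun · v) := by
  induction u generalizing s with
  | nil => simp
  | cons x u ih =>
    obtain ⟨a, _ | _⟩ := x
    · cases s with
      | nil => simp
      | cons b s => by_cases h : a = b <;> simp [h, ih]
    · simp [ih]

lemma IsDyck.dyckRun_eq {w : List (α × Bool)} (h : IsDyck w) (s : List α) :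
    dyckRun s w = some s := by
  induction h generalizing s with
  | nil => simp
  | wrap a _ ih => simp [dyckRun_append, ih]
  | append _ _ ihu ihv => simp [dyckRun_append, ihu, ihv]

lemma closesStack_of_dyckRun_eq_nil {s : List α} {w : List (α × Bool)}
    (h : dyckRun s w = some []) : ClosesStack s w := by
  induction w generalizing s with
  | nil =>
    obtain rfl : s = [] := by simpa using h
    exact IsDyck.nil
  | cons x w ih =>
    obtain ⟨a, _ | _⟩ := x
    · cases s with
      | nil => simp at h
      | cons b s =>
        obtain ⟨rfl, hw⟩ : a = b ∧ dyckRun s w = some [] := by simpa using h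
        exact ⟨[], w, IsDyck.nil, ih hw, rfl⟩
    · obtain ⟨u, v, hu, hv, rfl⟩ : ClosesStack (a :: s) w := ih (by simpa using h)
      have hwrap : (a, true) :: (u ++ (a, false) :: v) = ((a, true) :: u ++ [(a, false)]) ++ v := by
        simp
      rw [hwrap]
      exact hv.isDyck_append (hu.wrap a)

lemma dyckRun_replicate_open (b : α) (n : ℕ) (s : List α)
    (w : List (α × Bool)) :
    dyckRun s (List.replicate n (b, true) ++ w) = dyckRun (List.replicate n b ++ s) w := by
  induction n generalizing s w with
  | zero => simp
  | succ n ih =>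
    rw [List.replicate_succ', List.append_assoc, List.singleton_append, ih, dyckRun_cons_open,
      List.replicate_succ, List.cons_append]

theorem isDyck_iff_dyckRun {w : List (α × Bool)} : IsDyck w ↔ dyckRun [] w = some [] :=
  ⟨fun h => h.dyckRun_eq [], closesStack_of_dyckRun_eq_nil⟩

end Brackets

section UnaryCode

variable {α : Type*} (f : α → ℕ)

def unaryCode : α × Bool → List (Bool × Bool)
  | (a, true) => (true, true) :: List.replicate (f a) (false, true)
  | (a, false) => List.replicate (f a) (false, false) ++ [(true, false)]

def unaryStack (s : List α) : List Bool :=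
  (s.map fun a => List.replicate (f a) false ++ [true]).flatten

@[simp] lemma unaryStack_nil : unaryStack f [] = [] := rfl

@[simp] lemma unaryStack_cons (a : α) (s : List α) :
    unaryStack f (a :: s) = List.replicate (f a) false ++ true :: unaryStack f s := by
  simp [unaryStack]

lemma unaryStack_eq_nil_iff {s : List α} : unaryStack f s = [] ↔ s = [] := by
  cases s <;> simp

lemma dyckRun_replicate_close (m n : ℕ) (t : List Bool) (w : List (Bool × Bool)) :
    dyckRun (List.replicate m false ++ true :: t)
        (List.replicate n (false, false) ++ (true, false) :: w) =
      if m = n then dyckRun t w else none := by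
  induction n generalizing m with
  | zero => cases m <;> simp [List.replicate_succ]
  | succ n ih => cases m <;> simp [List.replicate_succ, ih]

variable [DecidableEq α] {f}

lemma dyckRun_flatten_map_unaryCode (hf : f.Injective) (s : List α) (w : List (α × Bool)) :
    dyckRun (unaryStack f s) (w.map (unaryCode f)).flatten
      = (dyckRun s w).map (unaryStack f) := by
  induction w generalizing s with
  | nil => simp
  | cons x w ih =>
    obtain ⟨a, _ | _⟩ := x
    · cases s with
      | nil => cases h : f a <;> simp [unaryCode, h, List.replicate_succ]
      | cons b s =>
        simp only [List.map_cons, List.flatten_cons, unaryCode, unaryStack_cons,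
          List.append_assoc, List.singleton_append, dyckRun_replicate_close,
          dyckRun_cons_cons_close, hf.eq_iff, eq_comm (a := b)]
        split_ifs <;> simp [ih]
    · simp only [List.map_cons, List.flatten_cons, unaryCode, List.cons_append,
        dyckRun_cons_open, dyckRun_replicate_open, ← unaryStack_cons, ih]

theorem isDyck_flatten_map_unaryCode_iff (hf : f.Injective) {w : List (α × Bool)} :
    IsDyck (w.map (unaryCode f)).flatten ↔ IsDyck w := by
  rw [isDyck_iff_dyckRun, isDyck_iff_dyckRun, ← unaryStack_nil f,
    dyckRun_flatten_map_unaryCode hf, Option.map_eq_some_iff]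
  simp [unaryStack_eq_nil_iff]

end UnaryCode

def P2.toBracket : P2 → Bool × Bool
  | .lp => (true, true)
  | .rp => (true, false)
  | .lb => (false, true)
  | .rb => (false, false)

def P2.ofBracket : Bool × Bool → P2
  | (true, true) => .lp
  | (true, false) => .rp
  | (false, true) => .lb
  | (false, false) => .rb

@[simp] lemma P2.ofBracket_toBracket (c : P2) : P2.ofBracket c.toBracket = c := by
  cases c <;> rfl

@[simp] lemma P2.toBracket_ofBracket (x : Bool × Bool) : (P2.ofBracket x).toBracket = x := by
  obtain ⟨_ | _, _ | _⟩ := x <;> rfl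

lemma Dyck2.isDyck_map_toBracket {w : List P2} (h : Dyck2 w) : IsDyck (w.map P2.toBracket) := by
  induction h with
  | nil => exact IsDyck.nil
  | paren _ ih => simpa [P2.toBracket] using ih.wrap true
  | brack _ ih => simpa [P2.toBracket] using ih.wrap false
  | concat _ _ ihu ihv => simpa using ihu.append ihv

lemma IsDyck.dyck2_map_ofBracket {w : List (Bool × Bool)} (h : IsDyck w) :
    Dyck2 (w.map P2.ofBracket) := by
  induction h with
  | nil => exact Dyck2.nil
  | wrap b _ ih =>
    cases b
    · simpa [P2.ofBracket] using ih.brack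
    · simpa [P2.ofBracket] using ih.paren
  | append _ _ ihu ihv => simpa using ihu.concat ihv

lemma dyck2_iff_isDyck_map_toBracket {w : List P2} : Dyck2 w ↔ IsDyck (w.map P2.toBracket) :=
  ⟨Dyck2.isDyck_map_toBracket, fun h => by simpa [Function.comp_def] using h.dyck2_map_ofBracket⟩

lemma dyckK_iff_isDyck {k : ℕ} {w : List (Fin k × Bool)} : DyckK k w ↔ IsDyck w := by
  constructor
  · intro h
    induction h with
    | nil => exact IsDyck.nil
    | wrap i _ ih => exact ih.wrap i
    | concat _ _ ihu ihv => exact ihu.append ihv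
  · intro h
    induction h with
    | nil => exact DyckK.nil
    | wrap i _ ih => exact DyckK.wrap i ih
    | append _ _ ihu ihv => exact DyckK.concat ihu ihv

theorem stmt15_general (k : ℕ) :
    ∃ φ : Fin k × Bool → List P2,
      ∀ w : List (Fin k × Bool), DyckK k w ↔ Dyck2 ((w.map φ).flatten) := by
  refine ⟨fun x => (unaryCode Fin.val x).map P2.ofBracket, fun w => ?_⟩
  rw [dyckK_iff_isDyck, dyck2_iff_isDyck_map_toBracket,
    ← isDyck_flatten_map_unaryCode_iff Fin.val_injective]
  simp [List.map_flatten, Function.comp_def]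

/-- For every `k ≥ 1` there is a homomorphism `φ` from the Dyck-k alphabet to words
over the Dyck-2 alphabet such that a word is in Dyck-k iff its `φ`-image is in
Dyck-2. -/
theorem stmt15 (k : ℕ) (hk : 1 ≤ k) :
    ∃ φ : Fin k × Bool → List P2,
      ∀ w : List (Fin k × Bool), DyckK k w ↔ Dyck2 ((w.map φ).flatten) :=
  stmt15_general k
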